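/- arXiv:1507.01670 — 7 statements merged into one kernel-verified Lean document; each statement's English description precedes it below -/
import Mathlib

section
/- Let G be a group, ψ : G → ℤ a group homomorphism, and K = ker ψ. For any elements g₀, g₁, …, g_k of G with ψ(g_j) = 1 for every j, the 'closed' product of commutators ⁅g₀,g₁⁆·⁅g₁,g₂⁆·⋯·⁅g_{k−1},g_k⁆·⁅g_k,g₀⁆ lies in the commutator subgroup ⁅K,K⁆ of K. -/
/-!
Passing from the loop through `g 0, …, g k` to the loop through `g 0, …, g (k+1)` multiplies the
closed product by `⁅a, c⁆⁻¹ ⁅a, b⁆ ⁅b, c⁆` with `a = g k`, `b = g (k+1)`, `c = g 0`, and this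
element is the conjugate `c ⁅a c⁻¹, b c⁻¹⁆ c⁻¹`. When `g 0, …, g k` all have length one, the
elements `a c⁻¹` and `b c⁻¹` lie in `K`, so the claim follows by induction on `k`.
-/

open scoped commutatorElement

namespace Subgroup

variable {G : Type*} [Group G] {N : Subgroup G} [N.Normal]

theorem commutatorElement_inv_mul_mul_mem_commutator {a b c : G} (ha : a * c⁻¹ ∈ N)
    (hb : b * c⁻¹ ∈ N) : ⁅a, c⁆⁻¹ * ⁅a, b⁆ * ⁅b, c⁆ ∈ ⁅N, N⁆ := by
  have h : ⁅a, c⁆⁻¹ * ⁅a, b⁆ * ⁅b, c⁆ = c * ⁅a * c⁻¹, b * c⁻¹⁆ * c⁻¹ := by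
    simp only [commutatorElement_def]
    group
  rw [h]
  exact Normal.conj_mem inferInstance _ (commutator_mem_commutator ha hb) c

theorem closed_commutator_product_mem_commutator (k : ℕ) {g : ℕ → G}
    (hg : ∀ j ≤ k, g j * (g 0)⁻¹ ∈ N) :
    ((List.range k).map fun j => ⁅g j, g (j + 1)⁆).prod * ⁅g k, g 0⁆ ∈ ⁅N, N⁆ := by
  induction k with
  | zero => simp
  | succ k ih =>
    have hstep :
        ((List.range (k + 1)).map fun j => ⁅g j, g (j + 1)⁆).prod * ⁅g (k + 1), g 0⁆ =
          (((List.range k).map fun j => ⁅g j, g (j + 1)⁆).prod * ⁅g k, g 0⁆) *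
            (⁅g k, g 0⁆⁻¹ * ⁅g k, g (k + 1)⁆ * ⁅g (k + 1), g 0⁆) := by
      rw [List.range_succ, List.map_append, List.prod_append, List.map_singleton,
        List.prod_singleton]
      group
    rw [hstep]
    exact mul_mem (ih fun j hj => hg j (hj.trans k.le_succ))
      (commutatorElement_inv_mul_mul_mem_commutator (hg k k.le_succ) (hg (k + 1) le_rfl))

end Subgroup

/-- Let `G` be a group, `ψ : G → ℤ` a group homomorphism (here `ℤ` is viewed
multiplicatively as `Multiplicative ℤ`), and `K = ker ψ`. For any elements
`g 0, g 1, …, g k` of `G` with `ψ (g j) = 1` for every `j ≤ k`, the "closed" product of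
commutators `⁅g 0, g 1⁆ ⁅g 1, g 2⁆ ⋯ ⁅g (k-1), g k⁆ ⁅g k, g 0⁆` lies in the commutator
subgroup `⁅K, K⁆`. -/
theorem closed_commutator_product_mem_commutator_ker
    {G : Type*} [Group G] (ψ : G →* Multiplicative ℤ)
    (k : ℕ) (g : ℕ → G)
    (hg : ∀ j ≤ k, ψ (g j) = Multiplicative.ofAdd 1) :
    ((List.range k).map fun j => ⁅g j, g (j + 1)⁆).prod * ⁅g k, g 0⁆ ∈
      ⁅ψ.ker, ψ.ker⁆ :=
  Subgroup.closed_commutator_product_mem_commutator k fun j hj => by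
    simp [MonoidHom.mem_ker, hg j hj, hg 0 k.zero_le]
end

section
/- Let F be the free group on generators β₁, …, βₙ and let φ : F → ℤ be the length homomorphism sending each generator βᵢ to 1 ∈ ℤ. Then for any sequence of indices i₀, i₁, …, i_k ∈ {1,…,n} (not necessarily distinct), the closed product of commutators ⁅β_{i₀},β_{i₁}⁆·⁅β_{i₁},β_{i₂}⁆·⋯·⁅β_{i_{k−1}},β_{i_k}⁆·⁅β_{i_k},β_{i₀}⁆ belongs to ⁅ker φ, ker φ⁆. -/
open scoped commutatorElement

/-!
Work modulo `N = ⁅K, K⁆` with `K = ker φ`, so that `A = K / N` is an abelian normal subgroup.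
All generators lie in one coset `A u`, and conjugation by any element of `A u` acts on `A` as
conjugation by `u`. Hence `⁅x, y⁆ = ⁅x y⁻¹, u⁆` for `x, y ∈ A u`, and `a ↦ ⁅a, u⁆` is
multiplicative on `A`. The closed product of commutators therefore telescopes to `⁅1, u⁆ = 1`.
-/

namespace Subgroup

section

variable {Q : Type*} [Group Q] {A : Subgroup Q}

theorem mul_inv_mem_of_mul_inv_mem {x y u : Q} (hx : x * u⁻¹ ∈ A) (hy : y * u⁻¹ ∈ A) :
    x * y⁻¹ ∈ A := by
  simpa [mul_assoc] using A.mul_mem hx (A.inv_mem hy)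

variable [A.Normal]

theorem conj_eq_conj_of_mul_inv_mem (hA : ∀ a ∈ A, ∀ b ∈ A, a * b = b * a)
    {a y u : Q} (ha : a ∈ A) (hy : y * u⁻¹ ∈ A) : y * a * y⁻¹ = u * a * u⁻¹ := by
  have hcomm := hA _ hy _ (‹A.Normal›.conj_mem a ha u)
  calc y * a * y⁻¹ = (y * u⁻¹) * (u * a * u⁻¹) * (y * u⁻¹)⁻¹ := by group
    _ = u * a * u⁻¹ := by rw [hcomm]; group

theorem commutatorElement_mem_of_mem_left {a : Q} (ha : a ∈ A) (u : Q) : ⁅a, u⁆ ∈ A :=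
  commutator_le_left A ⊤ (commutator_mem_commutator ha (mem_top u))

theorem commutatorElement_mul_left_of_mem (hA : ∀ a ∈ A, ∀ b ∈ A, a * b = b * a)
    {d c : Q} (hd : d ∈ A) (hc : c ∈ A) (u : Q) : ⁅d * c, u⁆ = ⁅d, u⁆ * ⁅c, u⁆ := by
  have hcu := commutatorElement_mem_of_mem_left hc u
  calc ⁅d * c, u⁆ = (d * ⁅c, u⁆ * d⁻¹) * ⁅d, u⁆ := by simp only [commutatorElement_def]; group
    _ = ⁅c, u⁆ * ⁅d, u⁆ := by rw [hA _ hd _ hcu]; group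
    _ = ⁅d, u⁆ * ⁅c, u⁆ := hA _ hcu _ (commutatorElement_mem_of_mem_left hd u)

theorem commutatorElement_eq_of_mul_inv_mem (hA : ∀ a ∈ A, ∀ b ∈ A, a * b = b * a)
    {x y u : Q} (hx : x * u⁻¹ ∈ A) (hy : y * u⁻¹ ∈ A) : ⁅x, y⁆ = ⁅x * y⁻¹, u⁆ := by
  have hxy := mul_inv_mem_of_mul_inv_mem hx hy
  calc ⁅x, y⁆ = (x * y⁻¹) * (y * (x * y⁻¹)⁻¹ * y⁻¹) := by simp only [commutatorElement_def]; group
    _ = (x * y⁻¹) * (u * (x * y⁻¹)⁻¹ * u⁻¹) := by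
      rw [conj_eq_conj_of_mul_inv_mem hA (A.inv_mem hxy) hy]
    _ = ⁅x * y⁻¹, u⁆ := by simp only [commutatorElement_def]; group

theorem prod_range_commutatorElement_eq (hA : ∀ a ∈ A, ∀ b ∈ A, a * b = b * a)
    {x : ℕ → Q} {u : Q} (hx : ∀ j, x j * u⁻¹ ∈ A) (m : ℕ) :
    ((List.range m).map fun j => ⁅x j, x (j + 1)⁆).prod = ⁅x 0 * (x m)⁻¹, u⁆ := by
  induction m with
  | zero => simp
  | succ m ih =>
    rw [List.range_succ, List.map_append, List.prod_append, ih, List.map_singleton,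
      List.prod_singleton, commutatorElement_eq_of_mul_inv_mem hA (hx m) (hx (m + 1)),
      ← commutatorElement_mul_left_of_mem hA (mul_inv_mem_of_mul_inv_mem (hx 0) (hx m))
      (mul_inv_mem_of_mul_inv_mem (hx m) (hx (m + 1)))]
    group

theorem prod_range_commutatorElement_mul_eq_one (hA : ∀ a ∈ A, ∀ b ∈ A, a * b = b * a)
    {x : ℕ → Q} {u : Q} (hx : ∀ j, x j * u⁻¹ ∈ A) (m : ℕ) :
    ((List.range m).map fun j => ⁅x j, x (j + 1)⁆).prod * ⁅x m, x 0⁆ = 1 := by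
  rw [prod_range_commutatorElement_eq hA hx, commutatorElement_eq_of_mul_inv_mem hA (hx m) (hx 0),
    ← commutatorElement_mul_left_of_mem hA (mul_inv_mem_of_mul_inv_mem (hx 0) (hx m))
      (mul_inv_mem_of_mul_inv_mem (hx m) (hx 0))]
  group

end

theorem prod_range_commutatorElement_mul_mem_commutator {G : Type*} [Group G]
    (K : Subgroup G) [K.Normal] {x : ℕ → G} (hx : ∀ j, x j * (x 0)⁻¹ ∈ K) (m : ℕ) :
    ((List.range m).map fun j => ⁅x j, x (j + 1)⁆).prod * ⁅x m, x 0⁆ ∈ ⁅K, K⁆ := by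
  let π := QuotientGroup.mk' ⁅K, K⁆
  have hA : ∀ a ∈ K.map π, ∀ b ∈ K.map π, a * b = b * a := by
    rintro _ ⟨a, ha, rfl⟩ _ ⟨b, hb, rfl⟩
    rw [← commutatorElement_eq_one_iff_mul_comm, ← map_commutatorElement,
      QuotientGroup.mk'_apply, QuotientGroup.eq_one_iff]
    exact commutator_mem_commutator ha hb
  have : (K.map π).Normal := Subgroup.Normal.map ‹_› π (QuotientGroup.mk'_surjective _)
  have hπx : ∀ j, π (x j) * (π (x 0))⁻¹ ∈ K.map π := fun j =>
    ⟨_, hx j, by simp only [map_mul, map_inv]⟩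
  rw [← QuotientGroup.eq_one_iff, ← QuotientGroup.mk'_apply, map_mul, map_list_prod,
    List.map_map]
  simp only [Function.comp_def, map_commutatorElement]
  exact prod_range_commutatorElement_mul_eq_one hA hπx m

end Subgroup

/-- Let `F` be the free group on generators `β 1, …, β n` and `φ : F → ℤ` the
length homomorphism sending each generator to `1 ∈ ℤ` (here `ℤ` viewed multiplicatively).
Then for any sequence of indices `i 0, …, i k` (not necessarily distinct), the closed
product of commutators `⁅β (i 0), β (i 1)⁆ ⋯ ⁅β (i (k-1)), β (i k)⁆ ⁅β (i k), β (i 0)⁆`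
belongs to `⁅ker φ, ker φ⁆`. -/
theorem closed_commutator_product_mem_commutator_ker_freeGroup
    (n : ℕ) (φ : FreeGroup (Fin n) →* Multiplicative ℤ)
    (hφ : ∀ i : Fin n, φ (FreeGroup.of i) = Multiplicative.ofAdd 1)
    (k : ℕ) (i : ℕ → Fin n) :
    ((List.range k).map fun j =>
        ⁅FreeGroup.of (i j), FreeGroup.of (i (j + 1))⁆).prod *
      ⁅FreeGroup.of (i k), FreeGroup.of (i 0)⁆ ∈ ⁅φ.ker, φ.ker⁆ :=
  φ.ker.prod_range_commutatorElement_mul_mem_commutator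
    (fun j => by rw [MonoidHom.mem_ker, map_mul, map_inv, hφ, hφ, mul_inv_cancel]) k
end

section
/- Let G be a group, ψ : G → ℤ a group homomorphism, and K = ker ψ. If x, y, z ∈ G satisfy ψ(x) = ψ(y) = ψ(z) = 1, then the triple product of commutators ⁅x,y⁆·⁅y,z⁆·⁅z,x⁆ lies in ⁅K,K⁆. -/
/-!
Write `a = x y⁻¹` and `c = z y⁻¹`, both in `K` since `x`, `y`, `z` have the same length.
A direct computation shows that `⁅x,y⁆ ⁅y,z⁆ ⁅z,x⁆` is the `a`-conjugate of the
commutator of the `y`-conjugates of `a⁻¹` and `c`; as `K` is normal, these lie in `K`, and `⁅K,K⁆`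
is normal as well.
-/

open scoped commutatorElement

theorem commutatorElement_mul_commutatorElement_mul_commutatorElement {G : Type*} [Group G]
    (x y z : G) :
    ⁅x, y⁆ * ⁅y, z⁆ * ⁅z, x⁆ =
      (x * y⁻¹) * ⁅y * (x * y⁻¹)⁻¹ * y⁻¹, y * (z * y⁻¹) * y⁻¹⁆ * (x * y⁻¹)⁻¹ := by
  simp only [commutatorElement_def]
  group

theorem Subgroup.commutatorElement_mul_commutatorElement_mul_commutatorElement_mem_commutator
    {G : Type*} [Group G] {N : Subgroup G} [N.Normal] {x y z : G}
    (hxy : x * y⁻¹ ∈ N) (hzy : z * y⁻¹ ∈ N) :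
    ⁅x, y⁆ * ⁅y, z⁆ * ⁅z, x⁆ ∈ ⁅N, N⁆ := by
  rw [commutatorElement_mul_commutatorElement_mul_commutatorElement]
  exact (Subgroup.commutator_normal N N).conj_mem _
    (Subgroup.commutator_mem_commutator (Normal.conj_mem ‹_› _ (inv_mem hxy) y)
      (Normal.conj_mem ‹_› _ hzy y)) _

/-- Let `G` be a group, `ψ : G → ℤ` a group homomorphism (with `ℤ` viewed
multiplicatively as `Multiplicative ℤ`), and `K = ker ψ`. If `x, y, z ∈ G` satisfy
`ψ x = ψ y = ψ z = 1`, then `⁅x,y⁆ ⁅y,z⁆ ⁅z,x⁆ ∈ ⁅K, K⁆`. -/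
theorem triple_commutator_product_mem_commutator_ker
    {G : Type*} [Group G] (ψ : G →* Multiplicative ℤ) (x y z : G)
    (hx : ψ x = Multiplicative.ofAdd 1)
    (hy : ψ y = Multiplicative.ofAdd 1)
    (hz : ψ z = Multiplicative.ofAdd 1) :
    ⁅x, y⁆ * ⁅y, z⁆ * ⁅z, x⁆ ∈ ⁅ψ.ker, ψ.ker⁆ :=
  Subgroup.commutatorElement_mul_commutatorElement_mul_commutatorElement_mem_commutator
    (by simp [MonoidHom.mem_ker, hx, hy]) (by simp [MonoidHom.mem_ker, hz, hy])
end

section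
/- Let G be a group, ψ : G → ℤ a group homomorphism, and K = ker ψ. Let g₀, g₁, …, g_k ∈ G satisfy ψ(g_j) = 1 for all j, and suppose that ⁅g_j, g_{j+1}⁆ ∈ ⁅K,K⁆ for every j = 0, …, k−1. Then ⁅g₀, g_k⁆ ∈ ⁅K,K⁆. -/
/-! Modulo `⁅K, K⁆`, commuting is a transitive relation on the elements of length one: if `b` has
length one, every length-one `a` is `b * x` with `x ∈ K`, and the images of such `x` commute with
each other. -/

open scoped commutatorElement

theorem Commute.of_inv_mul {G : Type*} [Group G] {a b c : G} (hab : Commute a b)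
    (hbc : Commute b c) (h : Commute (b⁻¹ * a) (b⁻¹ * c)) : Commute a c := by
  have hx : Commute b (b⁻¹ * a) := (Commute.refl b).inv_right.mul_right hab.symm
  have hy : Commute b (b⁻¹ * c) := (Commute.refl b).inv_right.mul_right hbc
  rw [← mul_inv_cancel_left b a, ← mul_inv_cancel_left b c]
  exact ((Commute.refl b).mul_right hy).mul_left (hx.symm.mul_right h)

theorem QuotientGroup.commute_mk_iff {G : Type*} [Group G] {N : Subgroup G} [N.Normal]
    {a b : G} : Commute (a : G ⧸ N) (b : G ⧸ N) ↔ ⁅a, b⁆ ∈ N := by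
  rw [← commutatorElement_eq_one_iff_commute, ← QuotientGroup.eq_one_iff, commutatorElement_def,
    commutatorElement_def, mk_mul, mk_mul, mk_mul, mk_inv, mk_inv]

theorem Subgroup.commutatorElement_mem_commutator_of_inv_mul_mem {G : Type*} [Group G]
    {H : Subgroup G} [H.Normal] {a b c : G} (ha : b⁻¹ * a ∈ H) (hc : b⁻¹ * c ∈ H)
    (hab : ⁅a, b⁆ ∈ ⁅H, H⁆) (hbc : ⁅b, c⁆ ∈ ⁅H, H⁆) : ⁅a, c⁆ ∈ ⁅H, H⁆ := by
  simp only [← QuotientGroup.commute_mk_iff] at hab hbc ⊢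
  have hac := QuotientGroup.commute_mk_iff.mpr (commutator_mem_commutator ha hc)
  simp only [QuotientGroup.mk_mul, QuotientGroup.mk_inv] at hac
  exact hab.of_inv_mul hbc hac

/-- Let `G` be a group, `ψ : G → ℤ` a group homomorphism (with `ℤ` viewed
multiplicatively as `Multiplicative ℤ`), and `K = ker ψ`. Let `g 0, …, g k ∈ G` satisfy
`ψ (g j) = 1` for all `j ≤ k`, and suppose `⁅g j, g (j+1)⁆ ∈ ⁅K, K⁆` for every `j < k`.
Then `⁅g 0, g k⁆ ∈ ⁅K, K⁆`. -/
theorem commutator_mem_of_chain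
    {G : Type*} [Group G] (ψ : G →* Multiplicative ℤ)
    (k : ℕ) (g : ℕ → G)
    (hg : ∀ j ≤ k, ψ (g j) = Multiplicative.ofAdd 1)
    (hchain : ∀ j < k, ⁅g j, g (j + 1)⁆ ∈ ⁅ψ.ker, ψ.ker⁆) :
    ⁅g 0, g k⁆ ∈ ⁅ψ.ker, ψ.ker⁆ := by
  induction k with
  | zero => simpa only [commutatorElement_self] using one_mem _
  | succ n ih =>
    have hker : ∀ i ≤ n + 1, (g n)⁻¹ * g i ∈ ψ.ker := fun i hi =>
      (ψ.eq_iff).mp ((hg i hi).trans (hg n n.le_succ).symm)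
    exact Subgroup.commutatorElement_mem_commutator_of_inv_mul_mem (hker 0 n.succ.zero_le)
      (hker (n + 1) le_rfl)
      (ih (fun j hj => hg j (hj.trans n.le_succ)) (fun j hj => hchain j (hj.trans n.lt_succ_self)))
      (hchain n n.lt_succ_self)
end

section
/- Let G be a group generated by elements β₁, …, βₙ, let ψ : G → ℤ be a group homomorphism with ψ(βᵢ) = 1 for every i, and set K = ker ψ. Suppose there is a connected simple graph Γ on the vertex set {1,…,n} such that for every edge {i,j} of Γ one has ⁅βᵢ, βⱼ⁆ ∈ ⁅K,K⁆. Then ⁅βᵢ, βⱼ⁆ ∈ ⁅K,K⁆ for all pairs i, j, and consequently the commutator subgroup of G equals ⁅K,K⁆, i.e. ⁅G,G⁆ = ⁅K,K⁆. -/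
open scoped commutatorElement

/-!
Work in `Q = G ⧸ ⁅K, K⁆`, where the image of `K` is abelian. If `a`, `b`, `c` have the same
length, then `a b⁻¹` and `c b⁻¹` lie in `K`, so their images commute; hence if the image of `b`
commutes with those of `a` and `c`, the images of `a = (a b⁻¹) b` and `c = (c b⁻¹) b` commute.
Commuting in `Q` is thus transitive on the generators, and connectedness of `Γ` spreads it from
the edges to all pairs. A group generated by pairwise commuting elements is abelian, so `Q` is
abelian, i.e. `⁅G, G⁆ ≤ ⁅K, K⁆`.
-/

theorem SimpleGraph.Connected.rel_of_adj {V : Type*} {Γ : SimpleGraph V} {r : V → V → Prop}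
    (hΓ : Γ.Connected) (hrefl : ∀ v, r v v) (htrans : ∀ u v w, r u v → r v w → r u w)
    (hadj : ∀ u v, Γ.Adj u v → r u v) (u v : V) : r u v :=
  ((Γ.reachable_iff_reflTransGen u v).1 (hΓ u v)).trans_induction_on hrefl (hadj _ _)
    fun _ _ ↦ htrans _ _ _

section Group

variable {G : Type*} [Group G]

theorem Commute.trans_of_commute_mul_inv {a b c : G} (hab : Commute a b) (hbc : Commute b c)
    (h : Commute (a * b⁻¹) (c * b⁻¹)) : Commute a c := by
  have hab' : Commute (a * b⁻¹) b := hab.mul_left (Commute.refl b).inv_left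
  have hcb' : Commute (c * b⁻¹) b := hbc.symm.mul_left (Commute.refl b).inv_left
  simpa using (h.mul_right hab').mul_left (hcb'.symm.mul_right (Commute.refl b))

theorem QuotientGroup.commute_mk_iff_commutatorElement_mem {N : Subgroup G} [N.Normal]
    (g h : G) : Commute (g : G ⧸ N) h ↔ ⁅g, h⁆ ∈ N := by
  rw [← commutatorElement_eq_one_iff_commute, ← QuotientGroup.eq_one_iff]
  rfl

theorem QuotientGroup.commute_mk_of_mem_commutator {K : Subgroup G} [K.Normal] {a b : G}
    (ha : a ∈ K) (hb : b ∈ K) : Commute (a : G ⧸ ⁅K, K⁆) b :=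
  (commute_mk_iff_commutatorElement_mem a b).2 (Subgroup.commutator_mem_commutator ha hb)

theorem QuotientGroup.commute_mk_trans_of_mul_inv_mem {K : Subgroup G} [K.Normal] {a b c : G}
    (ha : a * b⁻¹ ∈ K) (hc : c * b⁻¹ ∈ K) (hab : Commute (a : G ⧸ ⁅K, K⁆) b)
    (hbc : Commute (b : G ⧸ ⁅K, K⁆) c) : Commute (a : G ⧸ ⁅K, K⁆) c :=
  hab.trans_of_commute_mul_inv hbc (by simpa using commute_mk_of_mem_commutator ha hc)

theorem isMulCommutative_of_closure_eq_top {s : Set G} (hs : Subgroup.closure s = ⊤)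
    (hcomm : ∀ x ∈ s, ∀ y ∈ s, Commute x y) : IsMulCommutative G := by
  have hle : Subgroup.closure s ≤ Subgroup.centralizer s :=
    (Subgroup.closure_le _).2 fun x hx y hy ↦ (hcomm y hy x hx).eq
  rw [← Subgroup.center_eq_top_iff, eq_top_iff, ← Subgroup.centralizer_univ, ← Subgroup.coe_top,
    ← hs, Subgroup.centralizer_closure]
  exact hle

theorem commutator_le_of_closure_eq_top {s : Set G} (hs : Subgroup.closure s = ⊤)
    {N : Subgroup G} [N.Normal] (hN : ∀ x ∈ s, ∀ y ∈ s, ⁅x, y⁆ ∈ N) : commutator G ≤ N := by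
  refine Subgroup.Normal.quotient_commutative_iff_commutator_le.1
    (isMulCommutative_of_closure_eq_top (s := QuotientGroup.mk' N '' s) ?_ ?_)
  · rw [← MonoidHom.map_closure, hs]
    exact Subgroup.map_top_of_surjective _ (QuotientGroup.mk'_surjective N)
  · rintro _ ⟨x, hx, rfl⟩ _ ⟨y, hy, rfl⟩
    exact (QuotientGroup.commute_mk_iff_commutatorElement_mem x y).2 (hN x hx y hy)

end Group

/-- Let `G` be a group generated by `β 1, …, β n`, `ψ : G → ℤ` a group
homomorphism (with `ℤ` viewed multiplicatively as `Multiplicative ℤ`) with `ψ (β i) = 1`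
for every `i`, and `K = ker ψ`. If there is a connected simple graph `Γ` on `{1, …, n}`
such that `⁅β i, β j⁆ ∈ ⁅K, K⁆` for every edge `{i, j}` of `Γ`, then `⁅β i, β j⁆ ∈ ⁅K, K⁆`
for all pairs `i, j`, and `⁅G, G⁆ = ⁅K, K⁆`. -/
theorem admissible_graph_implies_commutator_eq
    {G : Type*} [Group G] (n : ℕ) (β : Fin n → G)
    (hgen : Subgroup.closure (Set.range β) = ⊤)
    (ψ : G →* Multiplicative ℤ)
    (hψ : ∀ i : Fin n, ψ (β i) = Multiplicative.ofAdd 1)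
    (Γ : SimpleGraph (Fin n)) (hconn : Γ.Connected)
    (hedge : ∀ i j : Fin n, Γ.Adj i j → ⁅β i, β j⁆ ∈ ⁅ψ.ker, ψ.ker⁆) :
    (∀ i j : Fin n, ⁅β i, β j⁆ ∈ ⁅ψ.ker, ψ.ker⁆) ∧
      commutator G = ⁅ψ.ker, ψ.ker⁆ := by
  have hlen (i j : Fin n) : β i * (β j)⁻¹ ∈ ψ.ker := by simp [MonoidHom.mem_ker, hψ]
  have hall (i j : Fin n) : ⁅β i, β j⁆ ∈ ⁅ψ.ker, ψ.ker⁆ := by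
    rw [← QuotientGroup.commute_mk_iff_commutatorElement_mem]
    refine hconn.rel_of_adj (r := fun i j ↦ Commute (β i : G ⧸ ⁅ψ.ker, ψ.ker⁆) (β j))
      (fun _ ↦ Commute.refl _) (fun i j k ↦ ?_) (fun i j hij ↦ ?_) i j
    · exact QuotientGroup.commute_mk_trans_of_mul_inv_mem (hlen i j) (hlen k j)
    · exact (QuotientGroup.commute_mk_iff_commutatorElement_mem _ _).2 (hedge i j hij)
  refine ⟨hall, le_antisymm ?_ (Subgroup.commutator_mono le_top le_top)⟩
  exact commutator_le_of_closure_eq_top hgen (by rintro _ ⟨i, rfl⟩ _ ⟨j, rfl⟩; exact hall i j)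
end

section
/- Let A and B be groups and let G = A × B be their direct product. Let ψ : G → ℤ be a group homomorphism, and suppose there exist a₀ ∈ A and b₀ ∈ B such that ψ(a₀, 1) = 1 and ψ(1, b₀) = 1. Then the commutator subgroup of G equals the commutator subgroup of K = ker ψ, i.e. ⁅G,G⁆ = ⁅K,K⁆. -/
/-!
Correcting by powers of `b₀` puts `(a, b₀ ^ n)` in `K = ker ψ` for every `a ∈ A`, and since powers
of `b₀` commute, commutators of such elements are exactly `(⁅a, a'⁆, 1)`. Symmetrically, using
`a₀`, every `(1, ⁅b, b'⁆)` lies in `⁅K, K⁆`, and these generate `⁅A × B, A × B⁆`.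
-/

open scoped commutatorElement

theorem MonoidHom.mul_zpow_neg_mem_ker {G : Type*} [Group G] (ψ : G →* Multiplicative ℤ)
    {t : G} (ht : ψ t = Multiplicative.ofAdd 1) (g : G) :
    g * t ^ (-(ψ g).toAdd) ∈ ψ.ker := by
  rw [MonoidHom.mem_ker, map_mul, map_zpow, ht, ← ofAdd_toAdd (ψ g), ← ofAdd_zsmul, ← ofAdd_add]
  simp

section

variable {A B : Type*} [Group A] [Group B] {K : Subgroup (A × B)}

theorem Prod.commutatorElement_mk (a a' : A) (b b' : B) :
    ⁅(a, b), (a', b')⁆ = (⁅a, a'⁆, ⁅b, b'⁆) :=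
  rfl

theorem Subgroup.map_inl_commutator_le (C : Subgroup B) [IsMulCommutative C]
    (hK : ∀ a : A, ∃ c ∈ C, (a, c) ∈ K) :
    (_root_.commutator A).map (MonoidHom.inl A B) ≤ ⁅K, K⁆ := by
  rw [Subgroup.map_le_iff_le_comap, _root_.commutator, Subgroup.commutator_le]
  intro a _ a' _
  obtain ⟨c, hc, hac⟩ := hK a
  obtain ⟨c', hc', hac'⟩ := hK a'
  have hcc' : ⁅c, c'⁆ = 1 :=
    commutatorElement_eq_one_iff_mul_comm.2 (setLike_mul_comm hc hc')
  simpa [Prod.commutatorElement_mk, hcc'] using Subgroup.commutator_mem_commutator hac hac'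

theorem Subgroup.map_inr_commutator_le (C : Subgroup A) [IsMulCommutative C]
    (hK : ∀ b : B, ∃ c ∈ C, (c, b) ∈ K) :
    (_root_.commutator B).map (MonoidHom.inr A B) ≤ ⁅K, K⁆ := by
  rw [Subgroup.map_le_iff_le_comap, _root_.commutator, Subgroup.commutator_le]
  intro b _ b' _
  obtain ⟨c, hc, hcb⟩ := hK b
  obtain ⟨c', hc', hcb'⟩ := hK b'
  have hcc' : ⁅c, c'⁆ = 1 :=
    commutatorElement_eq_one_iff_mul_comm.2 (setLike_mul_comm hc hc')
  simpa [Prod.commutatorElement_mk, hcc'] using Subgroup.commutator_mem_commutator hcb hcb'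

end

/-- Let `A`, `B` be groups and `G = A × B`. Let `ψ : G → ℤ` be a group
homomorphism (with `ℤ` viewed multiplicatively as `Multiplicative ℤ`), and suppose there
exist `a₀ ∈ A`, `b₀ ∈ B` with `ψ (a₀, 1) = 1` and `ψ (1, b₀) = 1`. Then
`⁅G, G⁆ = ⁅K, K⁆` where `K = ker ψ`. -/
theorem commutator_eq_of_direct_product
    {A B : Type*} [Group A] [Group B]
    (ψ : A × B →* Multiplicative ℤ) (a₀ : A) (b₀ : B)
    (ha : ψ (a₀, 1) = Multiplicative.ofAdd 1)
    (hb : ψ (1, b₀) = Multiplicative.ofAdd 1) :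
    commutator (A × B) = ⁅ψ.ker, ψ.ker⁆ := by
  refine le_antisymm ?_ (Subgroup.commutator_mono le_top le_top)
  rw [commutator, ← Subgroup.top_prod_top, Subgroup.commutator_prod_prod, Subgroup.prod_le_iff]
  constructor
  · refine Subgroup.map_inl_commutator_le (Subgroup.zpowers b₀) fun a ↦
      ⟨_, Subgroup.zpow_mem_zpowers b₀ (-(ψ (a, 1)).toAdd), ?_⟩
    simpa using ψ.mul_zpow_neg_mem_ker hb (a, 1)
  · refine Subgroup.map_inr_commutator_le (Subgroup.zpowers a₀) fun b ↦
      ⟨_, Subgroup.zpow_mem_zpowers a₀ (-(ψ (1, b)).toAdd), ?_⟩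
    simpa using ψ.mul_zpow_neg_mem_ker ha (1, b)
end

section
/- Let F be the free group on generators β₁, …, βₙ (with n ≥ 2) and let φ : F → ℤ be the length homomorphism sending each generator βᵢ to 1. Fix an index j ∈ {1,…,n}. Then ker φ is a free group, freely generated by the elements s_{k,i} = βⱼ^k · βᵢ · βⱼ^{−(k+1)} for k ∈ ℤ and i ∈ {1,…,n} with i ≠ j; that is, the family (k, i) ↦ βⱼ^k βᵢ βⱼ^{−(k+1)}, indexed by ℤ × {i : i ≠ j}, is a free basis of the subgroup ker φ. -/
noncomputable section KerLengthAux

open FreeGroup SemidirectProduct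

variable {n : ℕ} (j : Fin n)

/-- Index type for the basis of the kernel. -/
abbrev KLT (j : Fin n) : Type := ℤ × {i : Fin n // i ≠ j}

/-- Shift action of `Multiplicative ℤ` on the free group on `KLT j`. -/
def klShift : Multiplicative ℤ →* MulAut (FreeGroup (KLT j)) where
  toFun z := FreeGroup.freeGroupCongr
    (Equiv.prodCongr (Equiv.addRight z.toAdd) (Equiv.refl _))
  map_one' := by
    show FreeGroup.freeGroupCongr _ = 1
    have : (Equiv.prodCongr (Equiv.addRight ((1 : Multiplicative ℤ).toAdd))
        (Equiv.refl {i : Fin n // i ≠ j})) = Equiv.refl _ := by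
      apply Equiv.ext; rintro ⟨k, i⟩; simp
    rw [this, FreeGroup.freeGroupCongr_refl]; rfl
  map_mul' z w := by
    show _ = (FreeGroup.freeGroupCongr _).trans (FreeGroup.freeGroupCongr _)
    rw [FreeGroup.freeGroupCongr_trans,
      show ((Equiv.prodCongr (Equiv.addRight w.toAdd) (Equiv.refl {i : Fin n // i ≠ j})).trans
        (Equiv.prodCongr (Equiv.addRight z.toAdd) (Equiv.refl _)))
        = Equiv.prodCongr (Equiv.addRight ((z * w).toAdd)) (Equiv.refl _) from
        Equiv.ext (by rintro ⟨k, i⟩; simp [add_comm, add_assoc, add_left_comm])]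

@[simp] lemma klShift_of (z : Multiplicative ℤ) (k : ℤ) (i : {i : Fin n // i ≠ j}) :
    klShift j z (FreeGroup.of (k, i)) = FreeGroup.of (k + z.toAdd, i) := by
  simp [klShift]

/-- The map from the free group on `KLT j` into `FreeGroup (Fin n)`. -/
def klN : FreeGroup (KLT j) →* FreeGroup (Fin n) :=
  FreeGroup.lift fun p => FreeGroup.of j ^ p.1 * FreeGroup.of (p.2 : Fin n)
    * FreeGroup.of j ^ (-(p.1 + 1))

@[simp] lemma klN_of (k : ℤ) (i : {i : Fin n // i ≠ j}) :
    klN j (FreeGroup.of (k, i)) =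
      FreeGroup.of j ^ k * FreeGroup.of (i : Fin n) * FreeGroup.of j ^ (-(k + 1)) := by
  simp [klN]

/-- The isomorphism `FreeGroup (KLT j) ⋊ ℤ →* FreeGroup (Fin n)`. -/
def klPsi : FreeGroup (KLT j) ⋊[klShift j] Multiplicative ℤ →* FreeGroup (Fin n) :=
  SemidirectProduct.lift (klN j) (zpowersHom _ (FreeGroup.of j)) (by
    intro z
    ext ⟨k, i⟩
    simp only [MonoidHom.comp_apply, MulEquiv.coe_toMonoidHom, klShift_of, klN_of,
      MulAut.conj_apply, zpowersHom_apply]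
    rw [show (k + z.toAdd) = z.toAdd + k by ring,
      show (-(z.toAdd + k + 1)) = -(k+1) + (-z.toAdd) by ring, zpow_add, zpow_add]
    group)

@[simp] lemma klPsi_inl (x : FreeGroup (KLT j)) : klPsi j (inl x) = klN j x := by
  simp [klPsi]

@[simp] lemma klPsi_inr (z : Multiplicative ℤ) :
    klPsi j (inr z) = FreeGroup.of j ^ z.toAdd := by
  simp [klPsi]

/-- The inverse map. -/
def klPhi : FreeGroup (Fin n) →* FreeGroup (KLT j) ⋊[klShift j] Multiplicative ℤ :=
  FreeGroup.lift fun i => if h : i = j then inr (Multiplicative.ofAdd 1)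
    else inl (FreeGroup.of ((0 : ℤ), ⟨i, h⟩)) * inr (Multiplicative.ofAdd 1)

lemma klPsi_comp_klPhi : (klPsi j).comp (klPhi j) = MonoidHom.id _ := by
  ext i
  by_cases h : i = j
  · subst h
    simp [klPhi]
  · simp [klPhi, h]

lemma klPhi_of_j : klPhi j (FreeGroup.of j) = inr (Multiplicative.ofAdd 1) := by
  simp [klPhi]

lemma klPhi_inl_key (k : ℤ) (i : {i : Fin n // i ≠ j}) :
    klPhi j (FreeGroup.of j ^ k * FreeGroup.of (i : Fin n) * FreeGroup.of j ^ (-(k + 1))) =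
      inl (FreeGroup.of (k, i)) := by
  have hi : klPhi j (FreeGroup.of (i : Fin n)) =
      inl (FreeGroup.of ((0 : ℤ), i)) * inr (Multiplicative.ofAdd 1) := by
    simp [klPhi, i.2]
  have hpow : ∀ m : ℤ, (inr (Multiplicative.ofAdd 1) : FreeGroup (KLT j) ⋊[klShift j]
      Multiplicative ℤ) ^ m = inr (Multiplicative.ofAdd m) := by
    intro m
    rw [← map_zpow]; congr 1; simp [← ofAdd_zsmul]
  simp only [MonoidHom.map_mul, MonoidHom.map_zpow]
  rw [klPhi_of_j, hi, hpow, hpow]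
  apply SemidirectProduct.ext
  · simp [mul_left]
  · simp [mul_right, ← ofAdd_add]

lemma klPhi_comp_klPsi : (klPhi j).comp (klPsi j) = MonoidHom.id _ := by
  apply SemidirectProduct.hom_ext
  · refine FreeGroup.ext_hom _ _ ?_
    rintro ⟨k, i⟩
    simp only [MonoidHom.comp_apply, klPsi_inl, klN_of, MonoidHom.id_apply, klPhi_inl_key]
  · refine MonoidHom.ext_mint ?_
    simp [MonoidHom.comp_apply, klPsi_inr, klPhi_of_j]

lemma klPsi_leftinv (g : FreeGroup (Fin n)) : klPsi j (klPhi j g) = g :=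
  DFunLike.congr_fun (klPsi_comp_klPhi j) g

lemma klPhi_leftinv (x : FreeGroup (KLT j) ⋊[klShift j] Multiplicative ℤ) :
    klPhi j (klPsi j x) = x :=
  DFunLike.congr_fun (klPhi_comp_klPsi j) x

end KerLengthAux

/-- Let `F` be the free group on generators `β 1, …, β n` (with `n ≥ 2`)
and `φ : F → ℤ` the length homomorphism sending each generator to `1` (with `ℤ` viewed
multiplicatively as `Multiplicative ℤ`). Fix `j`. Then `ker φ` is a free group, freely
generated by the elements `s k i = β j ^ k * β i * β j ^ (-(k+1))` for `k ∈ ℤ` and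
`i ≠ j`; i.e. this family, indexed by `ℤ × {i // i ≠ j}`, is a free basis of `ker φ`. -/
theorem ker_length_free_basis
    (n : ℕ) (hn : 2 ≤ n) (j : Fin n)
    (φ : FreeGroup (Fin n) →* Multiplicative ℤ)
    (hφ : ∀ i : Fin n, φ (FreeGroup.of i) = Multiplicative.ofAdd 1) :
    ∃ b : FreeGroupBasis (ℤ × {i : Fin n // i ≠ j}) φ.ker,
      ∀ (k : ℤ) (i : {i : Fin n // i ≠ j}),
        (b (k, i) : FreeGroup (Fin n)) =
          FreeGroup.of j ^ k * FreeGroup.of (i : Fin n) * FreeGroup.of j ^ (-(k + 1)) := by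
  classical
  have hφΨ' : ∀ x : FreeGroup (KLT j) ⋊[klShift j] Multiplicative ℤ,
      φ (klPsi j x) = SemidirectProduct.rightHom x := by
    have hφΨ : φ.comp (klPsi j) =
        (SemidirectProduct.rightHom :
          FreeGroup (KLT j) ⋊[klShift j] Multiplicative ℤ →* Multiplicative ℤ) := by
      apply SemidirectProduct.hom_ext
      · ext ⟨k, i⟩
        simp only [MonoidHom.comp_apply, klPsi_inl, klN_of, map_mul, map_zpow, hφ,
          SemidirectProduct.rightHom_inl]
        rw [show ((Multiplicative.ofAdd 1) : Multiplicative ℤ) ^ k = Multiplicative.ofAdd k by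
          simp [← ofAdd_zsmul]]
        rw [show ((Multiplicative.ofAdd 1) : Multiplicative ℤ) ^ (-(k+1))
          = Multiplicative.ofAdd (-(k+1)) by simp [← ofAdd_zsmul]]
        simp [← ofAdd_add]
      · ext
        simp [hφ]
    exact fun x => DFunLike.congr_fun hφΨ x
  set e : FreeGroup (KLT j) →* FreeGroup (Fin n) :=
    (klPsi j).comp SemidirectProduct.inl with he
  have hemem : ∀ x, e x ∈ φ.ker := by
    intro x
    simp only [he, MonoidHom.comp_apply, MonoidHom.mem_ker, hφΨ',
      SemidirectProduct.rightHom_inl]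
  set e' : FreeGroup (KLT j) →* φ.ker := e.codRestrict φ.ker hemem with he'
  have hinj : Function.Injective e' := by
    intro x y hxy
    have hxy2 : e x = e y := congrArg Subtype.val hxy
    have : klPhi j (e x) = klPhi j (e y) := congrArg _ hxy2
    simp only [he, MonoidHom.comp_apply, klPhi_leftinv] at this
    exact SemidirectProduct.inl_injective this
  have hsurj : Function.Surjective e' := by
    rintro ⟨g, hg⟩
    rw [MonoidHom.mem_ker] at hg
    set p := klPhi j g with hp
    have hright : p.right = 1 := by
      have := hφΨ' p
      rw [hp, klPsi_leftinv, hg] at this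
      exact this.symm
    refine ⟨p.left, ?_⟩
    apply Subtype.ext
    show e p.left = g
    have hpl : SemidirectProduct.inl p.left = p := by
      rw [← SemidirectProduct.inl_left_mul_inr_right p, hright]
      simp
    rw [he, MonoidHom.comp_apply, hpl, hp, klPsi_leftinv]
  set E : FreeGroup (KLT j) ≃* φ.ker := MulEquiv.ofBijective e' ⟨hinj, hsurj⟩ with hE
  refine ⟨FreeGroupBasis.ofRepr E.symm, ?_⟩
  intro k i
  show ((E.symm.symm (FreeGroup.of (k, i)) : φ.ker) : FreeGroup (Fin n)) = _
  rw [MulEquiv.symm_symm]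
  show e (FreeGroup.of (k, i)) = _
  simp [he]
end
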